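/- Let F_k → F in ℝ^{n×n} with F stable (all eigenvalues have strictly negative real part), let α_k > 0 with α_k → 0 and Σ α_k = ∞, and let e_k, v_k ∈ ℝⁿ satisfy: the series Σ_{k=1}^∞ α_k e_k converges and v_k → 0. Then the sequence defined by y_{k+1} = y_k + α_k F_k y_k + α_k(e_k + v_k), with arbitrary initial value y_0, satisfies y_k → 0. -/

import Mathlib

/-!
For small `t > 0` stability of `F` puts the spectrum of `1 + tF` inside the open unit disc, so by
Gelfand's formula `‖(1 + tF)^m‖ < 1` for some `m ≥ 1`. The seminorm
`φ x = ∑_{j<m} ‖(1 + tF)^j x‖` is then equivalent to the norm and satisfies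
`φ((1 + tF) x) ≤ φ x - (1 - ‖(1 + tF)^m‖) ‖x‖`; since `x + sFx` is a convex combination of `x`
and `(1 + tF) x` for `0 ≤ s ≤ t`, `φ` is a Lyapunov function for the unperturbed recursion.
Absorbing the tail `∑_{j≥k} α_j e_j` of the convergent series into `y_k` leaves a perturbation
`α_k w_k` with `w_k → 0`, and one gets `φ(z_{k+1}) ≤ (1 - η α_k) φ(z_k) + α_k b_k` with `b_k → 0`,
which together with `∑ α_k = ∞` forces `φ(z_k) → 0`.
-/

open Filter Topology Finset

lemma tendsto_zero_of_le_one_sub_mul {u x : ℕ → ℝ} (hu : ∀ k, 0 ≤ u k)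
    (hrec : ∀ k, u (k + 1) ≤ (1 - x k) * u k)
    (hx : Tendsto (fun N => ∑ k ∈ range N, x k) atTop atTop) :
    Tendsto u atTop (𝓝 0) := by
  have hbound (k : ℕ) : u k ≤ u 0 * Real.exp (-∑ j ∈ range k, x j) := by
    induction k with
    | zero => simp
    | succ k ih =>
      calc u (k + 1) ≤ (1 - x k) * u k := hrec k
        _ ≤ Real.exp (-x k) * u k :=
          mul_le_mul_of_nonneg_right (by linarith [Real.add_one_le_exp (-x k)]) (hu k)
        _ ≤ Real.exp (-x k) * (u 0 * Real.exp (-∑ j ∈ range k, x j)) :=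
          mul_le_mul_of_nonneg_left ih (Real.exp_pos _).le
        _ = u 0 * Real.exp (-∑ j ∈ range (k + 1), x j) := by
          rw [sum_range_succ, neg_add, Real.exp_add]; ring
  have hlim : Tendsto (fun k => u 0 * Real.exp (-∑ j ∈ range k, x j)) atTop (𝓝 0) := by
    simpa using (Real.tendsto_exp_atBot.comp (tendsto_neg_atTop_atBot.comp hx)).const_mul (u 0)
  exact squeeze_zero hu hbound hlim

lemma tendsto_sum_range_add_atTop {x : ℕ → ℝ}
    (hx : Tendsto (fun N => ∑ k ∈ range N, x k) atTop atTop) (K : ℕ) :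
    Tendsto (fun N => ∑ k ∈ range N, x (k + K)) atTop atTop := by
  have h (N : ℕ) : ∑ k ∈ range N, x (k + K) =
      ∑ k ∈ range (N + K), x k - ∑ k ∈ range K, x k := by
    rw [add_comm N K, sum_range_add]; simp [add_comm]
  simp only [h]
  exact tendsto_atTop_add_const_right _ _ (hx.comp (tendsto_add_atTop_nat K))

lemma tendsto_zero_of_le_one_sub_mul_add_mul {a α b : ℕ → ℝ} {η : ℝ} (hη : 0 < η)
    (ha : ∀ k, 0 ≤ a k) (hα : ∀ᶠ k in atTop, 0 ≤ α k ∧ η * α k ≤ 1)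
    (hsum : Tendsto (fun N => ∑ k ∈ range N, α k) atTop atTop) (hb : Tendsto b atTop (𝓝 0))
    (hrec : ∀ᶠ k in atTop, a (k + 1) ≤ (1 - η * α k) * a k + α k * b k) :
    Tendsto a atTop (𝓝 0) := by
  refine tendsto_order.2 ⟨fun c hc => .of_forall fun k => hc.trans_le (ha k), fun c hc => ?_⟩
  obtain ⟨K, hK⟩ := eventually_atTop.1
    (hα.and (hrec.and (hb.eventually (eventually_le_nhds (by positivity : 0 < η * (c / 2))))))
  -- once `b_k ≤ η c / 2`, the excess of `a_k` over `c / 2` is contracted by the factor `1 - η α_k`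
  set d : ℕ → ℝ := fun k => max (a k - c / 2) 0
  have hd : Tendsto d atTop (𝓝 0) := by
    rw [← tendsto_add_atTop_iff_nat K]
    refine tendsto_zero_of_le_one_sub_mul (x := fun j => η * α (j + K))
      (fun j => le_max_right _ _) (fun j => ?_) ?_
    · obtain ⟨⟨hα0, hα1⟩, hrec, hbc⟩ := hK (j + K) (Nat.le_add_left _ _)
      simp only [d, show j + 1 + K = j + K + 1 by ring]
      refine max_le ?_ (mul_nonneg (by linarith) (le_max_right _ _))
      nlinarith [mul_le_mul_of_nonneg_left (le_max_left (a (j + K) - c / 2) 0) (sub_nonneg.2 hα1),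
        mul_le_mul_of_nonneg_left hbc hα0]
    · simp only [← mul_sum]
      exact (tendsto_sum_range_add_atTop hsum K).const_mul_atTop hη
  filter_upwards [hd.eventually (gt_mem_nhds (half_pos hc))] with k hk
  simp only [d] at hk
  linarith [le_max_left (a k - c / 2) 0]

lemma IsCompact.exists_pos_forall_norm_one_add_mul_lt_one {K : Set ℂ} (hK : IsCompact K)
    (hre : ∀ z ∈ K, z.re < 0) : ∃ t : ℝ, 0 < t ∧ ∀ z ∈ K, ‖1 + t * z‖ < 1 := by
  obtain ⟨δ, hδ, hδK⟩ := hK.exists_forall_le' Complex.continuous_re.neg.continuousOn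
    (a := 0) fun z hz => neg_pos.2 (hre z hz)
  obtain ⟨R, hR⟩ := hK.isBounded.exists_norm_le
  refine ⟨δ / (R ^ 2 + 1), by positivity, fun z hz => ?_⟩
  set t := δ / (R ^ 2 + 1)
  have ht : 0 < t := by positivity
  have htR : t * R ^ 2 < δ := by
    rw [div_mul_eq_mul_div, div_lt_iff₀ (by positivity)]; nlinarith
  have hsq : ‖1 + t * z‖ ^ 2 = 1 + 2 * t * z.re + t ^ 2 * ‖z‖ ^ 2 := by
    simp only [Complex.sq_norm, Complex.normSq_apply]
    simp; ring
  have hz2 : ‖z‖ ^ 2 ≤ R ^ 2 := pow_le_pow_left₀ (norm_nonneg z) (hR z hz) 2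
  have hzre : z.re ≤ -δ := le_neg.1 (hδK z hz)
  refine (pow_lt_one_iff_of_nonneg (norm_nonneg _) two_ne_zero).1 ?_
  rw [hsq]
  nlinarith [mul_le_mul_of_nonneg_left hz2 (sq_nonneg t), mul_lt_mul_of_pos_left htR ht]

lemma spectrum.sub_one_div_mem_of_mem_one_add_smul {𝕜 A : Type*} [Field 𝕜] [Ring A]
    [Algebra 𝕜 A] {a : A} {t : 𝕜} (ht : t ≠ 0) {z : 𝕜} (hz : z ∈ spectrum 𝕜 (1 + t • a)) :
    (z - 1) / t ∈ spectrum 𝕜 a := by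
  rw [← sub_add_cancel z 1, ← map_one (algebraMap 𝕜 A), spectrum.add_mem_add_iff] at hz
  refine (spectrum.smul_mem_smul_iff (r := Units.mk0 t ht)).1 ?_
  simpa [Units.smul_def, mul_div_cancel₀ _ ht] using hz

section SpectralRadius

variable {A : Type*} [NormedRing A] [NormedAlgebra ℂ A] [CompleteSpace A]

lemma exists_spectralRadius_one_add_smul_lt_one {a : A} (ha : ∀ z ∈ spectrum ℂ a, z.re < 0) :
    ∃ t : ℝ, 0 < t ∧ spectralRadius ℂ (1 + (t : ℂ) • a) < 1 := by
  obtain ⟨t, ht, hK⟩ := (spectrum.isCompact a).exists_pos_forall_norm_one_add_mul_lt_one ha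
  refine ⟨t, ht, ?_⟩
  rcases (spectrum ℂ (1 + (t : ℂ) • a)).eq_empty_or_nonempty with h | h
  · rw [spectralRadius, h]; simp
  refine spectrum.spectralRadius_lt_of_forall_lt_of_nonempty h fun z hz => ?_
  have ht' : (t : ℂ) ≠ 0 := by exact_mod_cast ht.ne'
  have := hK _ (spectrum.sub_one_div_mem_of_mem_one_add_smul ht' hz)
  rw [mul_div_cancel₀ _ ht', add_sub_cancel] at this
  exact_mod_cast this

lemma eventually_norm_pow_lt_one_of_spectralRadius_lt_one {a : A}
    (ha : spectralRadius ℂ a < 1) : ∀ᶠ m in atTop, ‖a ^ m‖ < 1 := by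
  filter_upwards [(spectrum.pow_norm_pow_one_div_tendsto_nhds_spectralRadius a).eventually
    (gt_mem_nhds ha)] with m hm
  rw [ENNReal.ofReal_lt_one] at hm
  by_contra! h
  exact hm.not_ge (Real.one_le_rpow h (by positivity))

end SpectralRadius

section AdaptedSeminorm

variable {𝕜 E : Type*} [NontriviallyNormedField 𝕜] [NormedAddCommGroup E] [NormedSpace 𝕜 E]

def adaptedSeminorm (S : E →L[𝕜] E) (m : ℕ) : Seminorm 𝕜 E :=
  ∑ j ∈ range m, (normSeminorm 𝕜 E).comp ((S ^ j : E →L[𝕜] E) : E →ₗ[𝕜] E)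

variable (S : E →L[𝕜] E) (m : ℕ) (x : E)

lemma adaptedSeminorm_apply : adaptedSeminorm S m x = ∑ j ∈ range m, ‖(S ^ j) x‖ := by
  simp [adaptedSeminorm, Module.End.pow_apply]

lemma norm_le_adaptedSeminorm (hm : m ≠ 0) : ‖x‖ ≤ adaptedSeminorm S m x := by
  rw [adaptedSeminorm_apply]
  simpa using single_le_sum (f := fun j => ‖(S ^ j) x‖) (fun j _ => norm_nonneg _)
    (mem_range.2 (Nat.pos_of_ne_zero hm))

lemma adaptedSeminorm_le : adaptedSeminorm S m x ≤ (∑ j ∈ range m, ‖S ^ j‖) * ‖x‖ := by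
  rw [adaptedSeminorm_apply, sum_mul]
  exact sum_le_sum fun j _ => (S ^ j).le_opNorm x

lemma adaptedSeminorm_apply_le :
    adaptedSeminorm S m (S x) ≤ adaptedSeminorm S m x - (1 - ‖S ^ m‖) * ‖x‖ := by
  have hshift : adaptedSeminorm S m (S x) + ‖x‖ = adaptedSeminorm S m x + ‖(S ^ m) x‖ := by
    have hpow (j : ℕ) : (S ^ j) (S x) = (S ^ (j + 1)) x := rfl
    simp only [adaptedSeminorm_apply, hpow]
    rw [← sum_range_succ, sum_range_succ']
    simp
  linarith [(S ^ m).le_opNorm x]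

end AdaptedSeminorm

section Recursion

variable {E : Type*} [NormedAddCommGroup E] [NormedSpace ℝ E]

lemma adaptedSeminorm_add_smul_le (A : E →L[ℝ] E) {t s : ℝ} (ht : 0 < t) (hs : 0 ≤ s)
    (hst : s ≤ t) (m : ℕ) (x : E) :
    adaptedSeminorm (1 + t • A) m (x + s • A x) ≤
      adaptedSeminorm (1 + t • A) m x - s / t * (1 - ‖(1 + t • A) ^ m‖) * ‖x‖ := by
  set φ := adaptedSeminorm (1 + t • A) m
  have hθ0 : 0 ≤ s / t := div_nonneg hs ht.le
  have hθ1 : s / t ≤ 1 := (div_le_one ht).2 hst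
  have hcomb : x + s • A x = (1 - s / t) • x + (s / t) • (1 + t • A) x := by
    simp only [add_apply, one_apply_eq_self, smul_apply, smul_add, smul_smul,
      div_mul_cancel₀ s ht.ne']
    module
  calc φ (x + s • A x) ≤ (1 - s / t) * φ x + s / t * φ ((1 + t • A) x) := by
        rw [hcomb]
        refine (map_add_le_add φ _ _).trans_eq ?_
        rw [map_smul_eq_mul, map_smul_eq_mul, Real.norm_of_nonneg hθ0,
          Real.norm_of_nonneg (sub_nonneg.2 hθ1)]
    _ ≤ (1 - s / t) * φ x + s / t * (φ x - (1 - ‖(1 + t • A) ^ m‖) * ‖x‖) := by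
        gcongr; exact adaptedSeminorm_apply_le _ _ _
    _ = φ x - s / t * (1 - ‖(1 + t • A) ^ m‖) * ‖x‖ := by ring

lemma adaptedSeminorm_add_smul_add_smul_le (A T : E →L[ℝ] E) {t s : ℝ} (ht : 0 < t)
    (hs : 0 ≤ s) (hst : s ≤ t) (m : ℕ) (x w : E) :
    adaptedSeminorm (1 + t • A) m (x + s • T x + s • w) ≤
      adaptedSeminorm (1 + t • A) m x - s / t * (1 - ‖(1 + t • A) ^ m‖) * ‖x‖ +
        s * ((∑ j ∈ range m, ‖(1 + t • A) ^ j‖) * (‖T - A‖ * ‖x‖ + ‖w‖)) := by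
  set φ := adaptedSeminorm (1 + t • A) m
  have hsplit : x + s • T x + s • w = (x + s • A x) + s • ((T - A) x + w) := by
    rw [sub_apply]; module
  have hpert : φ ((T - A) x + w) ≤
      (∑ j ∈ range m, ‖(1 + t • A) ^ j‖) * (‖T - A‖ * ‖x‖ + ‖w‖) := by
    refine (adaptedSeminorm_le _ _ _).trans ?_
    gcongr
    exact (norm_add_le _ _).trans (add_le_add_left ((T - A).le_opNorm x) _)
  calc φ (x + s • T x + s • w) ≤ φ (x + s • A x) + s * φ ((T - A) x + w) := by
        rw [hsplit]
        refine (map_add_le_add φ _ _).trans_eq ?_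
        rw [map_smul_eq_mul, Real.norm_of_nonneg hs]
    _ ≤ _ := by
        gcongr
        exact adaptedSeminorm_add_smul_le A ht hs hst m x

theorem tendsto_zero_of_stable_recursion_of_tendsto_zero {T : ℕ → E →L[ℝ] E} {A : E →L[ℝ] E}
    (hT : Tendsto T atTop (𝓝 A)) {t : ℝ} (ht : 0 < t) {m : ℕ} (hm : m ≠ 0)
    (hA : ‖(1 + t • A) ^ m‖ < 1) {α : ℕ → ℝ} (hα : ∀ k, 0 ≤ α k)
    (hα0 : Tendsto α atTop (𝓝 0))
    (hαsum : Tendsto (fun N => ∑ k ∈ range N, α k) atTop atTop) {w z : ℕ → E}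
    (hw : Tendsto w atTop (𝓝 0)) (hz : ∀ k, z (k + 1) = z k + α k • T k (z k) + α k • w k) :
    Tendsto z atTop (𝓝 0) := by
  set φ := adaptedSeminorm (1 + t • A) m
  set δ := 1 - ‖(1 + t • A) ^ m‖
  set C := ∑ j ∈ range m, ‖(1 + t • A) ^ j‖
  have hδ : 0 < δ := sub_pos.2 hA
  have hC : 0 ≤ C := sum_nonneg fun j _ => norm_nonneg _
  set κ := δ / (2 * t)
  set η := κ / (C + 1)
  have hη : 0 < η := by positivity
  have hsmall : ∀ᶠ k in atTop, α k ≤ t ∧ η * α k ≤ 1 ∧ C * ‖T k - A‖ ≤ κ := by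
    refine (hα0.eventually (eventually_le_nhds ht)).and
      (((hα0.const_mul η).eventually (eventually_le_nhds (by simp))).and ?_)
    have := (tendsto_iff_norm_sub_tendsto_zero.1 hT).const_mul C
    rw [mul_zero] at this
    exact this.eventually (eventually_le_nhds (by positivity))
  have hstep : ∀ᶠ k in atTop,
      φ (z (k + 1)) ≤ (1 - η * α k) * φ (z k) + α k * (C * ‖w k‖) := by
    filter_upwards [hsmall] with k hk
    obtain ⟨hαt, -, hTA⟩ := hk
    have hφ_le : φ (z k) ≤ (C + 1) * ‖z k‖ :=
      (adaptedSeminorm_le _ _ _).trans (by gcongr; linarith)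
    have hCT := mul_le_mul_of_nonneg_right hTA (mul_nonneg (hα k) (norm_nonneg (z k)))
    have hηφ := mul_le_mul_of_nonneg_left hφ_le (mul_nonneg hη.le (hα k))
    have hκ : α k / t * δ * ‖z k‖ = 2 * (κ * (α k * ‖z k‖)) := by
      simp only [κ]; field_simp
    have hηC : η * α k * ((C + 1) * ‖z k‖) = κ * (α k * ‖z k‖) := by
      simp only [η]; field_simp
    calc φ (z (k + 1))
        ≤ φ (z k) - α k / t * δ * ‖z k‖ + α k * (C * (‖T k - A‖ * ‖z k‖ + ‖w k‖)) := by
          rw [hz k]; exact adaptedSeminorm_add_smul_add_smul_le A (T k) ht (hα k) hαt m _ _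
      _ ≤ (1 - η * α k) * φ (z k) + α k * (C * ‖w k‖) := by
          rw [hκ]; linarith
  have hφz : Tendsto (fun k => φ (z k)) atTop (𝓝 0) := by
    refine tendsto_zero_of_le_one_sub_mul_add_mul hη (fun k => apply_nonneg φ _) ?_ hαsum ?_ hstep
    · filter_upwards [hsmall] with k hk using ⟨hα k, hk.2.1⟩
    · simpa using (tendsto_norm_zero.comp hw).const_mul C
  exact squeeze_zero_norm (fun k => norm_le_adaptedSeminorm _ _ (z k) hm) hφz

theorem tendsto_zero_of_stable_recursion {T : ℕ → E →L[ℝ] E} {A : E →L[ℝ] E}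
    (hT : Tendsto T atTop (𝓝 A)) {t : ℝ} (ht : 0 < t) {m : ℕ} (hm : m ≠ 0)
    (hA : ‖(1 + t • A) ^ m‖ < 1) {α : ℕ → ℝ} (hα : ∀ k, 0 ≤ α k)
    (hα0 : Tendsto α atTop (𝓝 0))
    (hαsum : Tendsto (fun N => ∑ k ∈ range N, α k) atTop atTop) {e v y : ℕ → E} {s : E}
    (he : Tendsto (fun N => ∑ k ∈ range N, α k • e k) atTop (𝓝 s))
    (hv : Tendsto v atTop (𝓝 0))
    (hy : ∀ k, y (k + 1) = y k + α k • T k (y k) + α k • (e k + v k)) :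
    Tendsto y atTop (𝓝 0) := by
  set r : ℕ → E := fun k => s - ∑ j ∈ range k, α j • e j
  have hr : Tendsto r atTop (𝓝 0) := by simpa using he.const_sub s
  have hTr : Tendsto (fun k => T k (r k)) atTop (𝓝 0) := by
    simpa [Function.comp_def] using
      (isBoundedBilinearMap_apply.continuous.tendsto (A, 0)).comp (hT.prodMk_nhds hr)
  have hz : Tendsto (fun k => y k + r k) atTop (𝓝 0) := by
    refine tendsto_zero_of_stable_recursion_of_tendsto_zero hT ht hm hA hα hα0 hαsum
      (by simpa using hv.sub hTr) fun k => ?_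
    simp only [r, hy k, sum_range_succ, map_add, map_sub]
    module
  simpa using hz.sub hr

end Recursion

namespace Matrix

variable (ι 𝕜 : Type*) [Fintype ι] [DecidableEq ι] [NontriviallyNormedField 𝕜] [CompleteSpace 𝕜]

def toCLMAlgEquiv' : Matrix ι ι 𝕜 ≃ₐ[𝕜] ((ι → 𝕜) →L[𝕜] (ι → 𝕜)) :=
  toLinAlgEquiv'.trans (Module.End.toContinuousLinearMap (ι → 𝕜))

variable {ι 𝕜}

lemma continuous_toCLMAlgEquiv' : Continuous (toCLMAlgEquiv' ι 𝕜) :=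
  LinearMap.continuous_of_finiteDimensional (toCLMAlgEquiv' ι 𝕜).toLinearMap

open scoped Norms.Operator

lemma linfty_opNorm_toCLMAlgEquiv' [NormedAlgebra ℝ 𝕜] (A : Matrix ι ι 𝕜) :
    ‖toCLMAlgEquiv' ι 𝕜 A‖ = ‖A‖ :=
  (linfty_opNorm_eq_opNorm A).symm

lemma linfty_opNorm_map_ofReal {m n : Type*} [Fintype m] [Fintype n] (A : Matrix m n ℝ) :
    ‖A.map (Complex.ofReal : ℝ → ℂ)‖ = ‖A‖ := by
  simp [linfty_opNorm_def]

lemma exists_norm_pow_one_add_smul_toCLMAlgEquiv'_lt_one (A : Matrix ι ι ℝ)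
    (hA : ∀ z ∈ spectrum ℂ (A.map (Complex.ofReal : ℝ → ℂ)), z.re < 0) :
    ∃ t : ℝ, 0 < t ∧ ∃ m ≠ 0, ‖(1 + t • toCLMAlgEquiv' ι ℝ A) ^ m‖ < 1 := by
  obtain ⟨t, ht, hρ⟩ := exists_spectralRadius_one_add_smul_lt_one hA
  obtain ⟨m, hm, hm0⟩ := ((eventually_norm_pow_lt_one_of_spectralRadius_lt_one hρ).and
    (eventually_ne_atTop 0)).exists
  refine ⟨t, ht, m, hm0, ?_⟩
  have hmap : ((1 + t • A) ^ m).map Complex.ofReal = (1 + (t : ℂ) • A.map Complex.ofReal) ^ m := by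
    change Complex.ofRealHom.mapMatrix _ = _
    rw [map_pow, map_add, map_one]
    congr 2
    ext i j
    simp
  rw [← map_one (toCLMAlgEquiv' ι ℝ), ← map_smul, ← map_add, ← map_pow,
    linfty_opNorm_toCLMAlgEquiv', ← linfty_opNorm_map_ofReal, hmap]
  exact hm

end Matrix

/-- Deterministic stability lemma (Chen, Lemma 3.1.1): if `F_k → F` with `F` stable,
`α_k > 0`, `α_k → 0`, `Σ α_k = ∞`, `Σ α_k e_k` converges and `v_k → 0`, then the recursion
`y_{k+1} = y_k + α_k F_k y_k + α_k (e_k + v_k)` tends to zero for any initial value. -/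
theorem stmt6 {n : ℕ} (F : ℕ → Matrix (Fin n) (Fin n) ℝ) (Flim : Matrix (Fin n) (Fin n) ℝ)
    (hF : Tendsto F atTop (nhds Flim))
    (hstable : ∀ z ∈ spectrum ℂ (Flim.map (Complex.ofReal : ℝ → ℂ)), z.re < 0)
    (α : ℕ → ℝ) (hαpos : ∀ k, 0 < α k) (hα0 : Tendsto α atTop (nhds 0))
    (hαdiv : Tendsto (fun N => ∑ k ∈ Finset.range N, α k) atTop atTop)
    (e v : ℕ → Fin n → ℝ)
    (he : ∃ s : Fin n → ℝ,
      Tendsto (fun N => ∑ k ∈ Finset.range N, α k • e k) atTop (nhds s))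
    (hv : Tendsto v atTop (nhds 0))
    (y : ℕ → Fin n → ℝ)
    (hrec : ∀ k, y (k + 1) = y k + α k • (F k).mulVec (y k) + α k • (e k + v k)) :
    Tendsto y atTop (nhds 0) := by
  obtain ⟨s, hs⟩ := he
  obtain ⟨t, ht, m, hm, hFlim⟩ := Flim.exists_norm_pow_one_add_smul_toCLMAlgEquiv'_lt_one hstable
  exact tendsto_zero_of_stable_recursion ((Matrix.continuous_toCLMAlgEquiv'.tendsto Flim).comp hF)
    ht hm hFlim (fun k => (hαpos k).le) hα0 hαdiv hs hv hrec
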